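/- arXiv:2306.08567 — 4 statements merged into one kernel-verified Lean document; each statement's English description precedes it below -/
import Mathlib

section
/- Let G be a finite abelian group, B a regular Bohr set in G of dimension d, and B' a subset of the dilate B_δ where δ ≤ ε/(24d). Then the L1 distance between μ_B * μ_{B'} and μ_B is at most ε, where μ_X denotes the normalized indicator function 1_X/|X| and * denotes convolution. -/
/-
`μ_B * μ_{B'} - μ_B` is the average over `t ∈ B'` of `μ_B(· - t) - μ_B`. For `t ∈ B_δ`,
`1_B(· - t)` and `1_B` differ only on the annulus `B_{1+δ} \ B_{1-δ}`, so each translate is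
`L¹`-close to `μ_B` within `(|B_{1+δ}| - |B_{1-δ}|) / |B| ≤ 24dδ` by regularity at `±δ`.
Regularity may only be invoked when `δ ≤ 1/(12d)`; otherwise `ε > 2` and the trivial bound
`‖μ_B(· - t) - μ_B‖₁ ≤ 2` suffices.
-/

open scoped Classical BigOperators Pointwise

variable {G : Type*} [AddCommGroup G] [Fintype G]

noncomputable def bohr (Γ : Finset (AddChar G ℂ)) (ρ : ℝ) : Finset G :=
  Finset.univ.filter fun x => ∀ γ ∈ Γ, ‖1 - γ x‖ ≤ ρ

noncomputable def BohrRegular (Γ : Finset (AddChar G ℂ)) (ρ : ℝ) : Prop :=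
  ∀ δ : ℝ, |δ| ≤ 1 / (12 * Γ.card) →
    (1 - 12 * Γ.card * |δ|) * (bohr Γ ρ).card ≤ ((bohr Γ (ρ * (1 + δ))).card : ℝ) ∧
    ((bohr Γ (ρ * (1 + δ))).card : ℝ) ≤ (1 + 12 * Γ.card * |δ|) * (bohr Γ ρ).card

noncomputable def ind (A : Finset G) : G → ℝ := fun x => if x ∈ A then 1 else 0

noncomputable def mu (A : Finset G) : G → ℝ := fun x => (if x ∈ A then 1 else 0) / A.card

noncomputable def conv (f g : G → ℝ) : G → ℝ := fun x => ∑ t, f t * g (x - t)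

noncomputable def l1 (f : G → ℝ) : ℝ := ∑ x, |f x|

section L1

variable {α : Type*}

lemma mu_nonneg (A : Finset α) (x : α) : 0 ≤ mu A x := by
  unfold mu; split_ifs <;> positivity

lemma mu_eq_ind_div_card (A : Finset α) (x : α) : mu A x = ind A x / A.card := rfl

lemma sum_ind [Fintype α] (A : Finset α) : ∑ x, ind A x = A.card := by
  simp [ind, Finset.sum_ite_mem]

lemma sum_mu [Fintype α] {A : Finset α} (hA : A.Nonempty) : ∑ x, mu A x = 1 := by
  simp_rw [mu_eq_ind_div_card, ← Finset.sum_div, sum_ind]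
  exact div_self (Nat.cast_ne_zero.2 hA.card_pos.ne')

lemma l1_mu [Fintype α] {A : Finset α} (hA : A.Nonempty) : l1 (mu A) = 1 := by
  simp_rw [l1, abs_of_nonneg (mu_nonneg A _), sum_mu hA]

lemma l1_translate_sub_le (f : G → ℝ) (t : G) :
    l1 (fun x => f (x - t) - f x) ≤ 2 * l1 f := by
  have htranslate : ∑ x, |f (x - t)| = l1 f :=
    Fintype.sum_equiv (Equiv.subRight t) _ _ fun _ => rfl
  calc l1 (fun x => f (x - t) - f x) ≤ ∑ x, (|f (x - t)| + |f x|) :=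
        Finset.sum_le_sum fun x _ => abs_sub _ _
    _ = 2 * l1 f := by rw [Finset.sum_add_distrib, htranslate, l1]; ring

lemma conv_sub_eq_sum (f g : G → ℝ) (x : G) :
    conv f g x - (∑ t, g t) * f x = ∑ t, g t * (f (x - t) - f x) := by
  have hcomm : conv f g x = ∑ t, g t * f (x - t) :=
    Fintype.sum_equiv (Equiv.subLeft x) _ _ fun t => by simp [mul_comm]
  simp only [hcomm, Finset.sum_mul, mul_sub, Finset.sum_sub_distrib]

lemma l1_conv_mu_sub_le {f : G → ℝ} {A : Finset G} {η : ℝ} (hA : A.Nonempty)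
    (h : ∀ t ∈ A, l1 (fun x => f (x - t) - f x) ≤ η) :
    l1 (fun x => conv f (mu A) x - f x) ≤ η := by
  have hterm : ∀ t, mu A t * l1 (fun x => f (x - t) - f x) ≤ mu A t * η := fun t => by
    by_cases ht : t ∈ A
    · exact mul_le_mul_of_nonneg_left (h t ht) (mu_nonneg A t)
    · simp [mu, ht]
  calc l1 (fun x => conv f (mu A) x - f x)
      = ∑ x, |∑ t, mu A t * (f (x - t) - f x)| := by
        simp_rw [l1, ← conv_sub_eq_sum, sum_mu hA, one_mul]
    _ ≤ ∑ x, ∑ t, mu A t * |f (x - t) - f x| := by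
        gcongr with x
        refine (Finset.abs_sum_le_sum_abs _ _).trans_eq (Finset.sum_congr rfl fun t _ => ?_)
        rw [abs_mul, abs_of_nonneg (mu_nonneg A t)]
    _ = ∑ t, mu A t * l1 (fun x => f (x - t) - f x) := by
        rw [Finset.sum_comm]; simp_rw [l1, Finset.mul_sum]
    _ ≤ ∑ t, mu A t * η := Finset.sum_le_sum fun t _ => hterm t
    _ = η := by rw [← Finset.sum_mul, sum_mu hA, one_mul]

end L1

section Bohr

variable {Γ : Finset (AddChar G ℂ)} {r s : ℝ} {x y : G}

lemma mem_bohr : x ∈ bohr Γ r ↔ ∀ γ ∈ Γ, ‖1 - γ x‖ ≤ r := by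
  simp [bohr]

lemma zero_mem_bohr (hr : 0 ≤ r) : (0 : G) ∈ bohr Γ r :=
  mem_bohr.2 fun γ _ => by simp [hr]

lemma bohr_mono (h : r ≤ s) : bohr Γ r ⊆ bohr Γ s :=
  fun _ hx => mem_bohr.2 fun γ hγ => (mem_bohr.1 hx γ hγ).trans h

lemma add_mem_bohr (hx : x ∈ bohr Γ r) (hy : y ∈ bohr Γ s) : x + y ∈ bohr Γ (r + s) := by
  refine mem_bohr.2 fun γ hγ => ?_
  have split : (1 : ℂ) - γ (x + y) = (1 - γ x) + γ x * (1 - γ y) := by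
    rw [AddChar.map_add_eq_mul]; ring
  calc ‖1 - γ (x + y)‖ ≤ ‖1 - γ x‖ + ‖γ x * (1 - γ y)‖ := split ▸ norm_add_le _ _
    _ = ‖1 - γ x‖ + ‖1 - γ y‖ := by rw [norm_mul, AddChar.norm_apply, one_mul]
    _ ≤ r + s := add_le_add (mem_bohr.1 hx γ hγ) (mem_bohr.1 hy γ hγ)

lemma neg_mem_bohr (hx : x ∈ bohr Γ r) : -x ∈ bohr Γ r := by
  refine mem_bohr.2 fun γ hγ => ?_
  have factor : (1 : ℂ) - γ (-x) = γ (-x) * -(1 - γ x) := by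
    rw [mul_neg, mul_sub, ← AddChar.map_add_eq_mul, neg_add_cancel, AddChar.map_zero_eq_one]
    ring
  rw [factor, norm_mul, AddChar.norm_apply, one_mul, norm_neg]
  exact mem_bohr.1 hx γ hγ

lemma abs_ind_bohr_sub_le {ρ δ : ℝ} (hρ : 0 ≤ ρ) (hδ : 0 ≤ δ) {t : G}
    (ht : t ∈ bohr Γ (ρ * δ)) (x : G) :
    |ind (bohr Γ ρ) (x - t) - ind (bohr Γ ρ) x|
      ≤ ind (bohr Γ (ρ * (1 + δ))) x - ind (bohr Γ (ρ * (1 - δ))) x := by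
  have hLB : bohr Γ (ρ * (1 - δ)) ⊆ bohr Γ ρ := bohr_mono (by nlinarith)
  have hBU : bohr Γ ρ ⊆ bohr Γ (ρ * (1 + δ)) := bohr_mono (by nlinarith)
  by_cases hxL : x ∈ bohr Γ (ρ * (1 - δ))
  · have hxt : x - t ∈ bohr Γ ρ := by
      simpa [sub_eq_add_neg, mul_sub, mul_add] using add_mem_bohr hxL (neg_mem_bohr ht)
    simp [ind, hxt, hxL, hLB hxL, hBU (hLB hxL)]
  by_cases hxU : x ∈ bohr Γ (ρ * (1 + δ))
  · simp only [ind, hxU, hxL, if_true, if_false, sub_zero]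
    split_ifs <;> norm_num
  · have hxt : x - t ∉ bohr Γ ρ := fun h => hxU <| by
      simpa [mul_add, add_comm] using add_mem_bohr h ht
    have hx : x ∉ bohr Γ ρ := fun h => hxU (hBU h)
    simp [ind, hxt, hx, hxU, hxL]

lemma BohrRegular.card_sub_card_le {ρ δ : ℝ} (hreg : BohrRegular Γ ρ) (hδ : 0 ≤ δ)
    (hδd : δ ≤ 1 / (12 * Γ.card)) :
    ((bohr Γ (ρ * (1 + δ))).card : ℝ) - (bohr Γ (ρ * (1 - δ))).card
      ≤ 24 * Γ.card * δ * (bohr Γ ρ).card := by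
  have hupper := (hreg δ (by rwa [abs_of_nonneg hδ])).2
  have hlower := (hreg (-δ) (by rwa [abs_neg, abs_of_nonneg hδ])).1
  rw [abs_of_nonneg hδ] at hupper
  rw [abs_neg, abs_of_nonneg hδ, ← sub_eq_add_neg] at hlower
  linarith

lemma l1_translate_mu_bohr_sub_le {ρ δ : ℝ} (hρ : 0 ≤ ρ)
    (hδ : 0 ≤ δ) {t : G} (ht : t ∈ bohr Γ (ρ * δ)) :
    l1 (fun x => mu (bohr Γ ρ) (x - t) - mu (bohr Γ ρ) x)
      ≤ (((bohr Γ (ρ * (1 + δ))).card : ℝ) - (bohr Γ (ρ * (1 - δ))).card) / (bohr Γ ρ).card := by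
  simp_rw [l1, mu_eq_ind_div_card, ← sub_div, abs_div, Nat.abs_cast, ← Finset.sum_div]
  gcongr
  rw [← sum_ind, ← sum_ind, ← Finset.sum_sub_distrib]
  exact Finset.sum_le_sum fun x _ => abs_ind_bohr_sub_le hρ hδ ht x

end Bohr

theorem bohr_convolution_l1_general {G : Type*} [AddCommGroup G] [Fintype G]
    (Γ : Finset (AddChar G ℂ)) (ρ ε δ : ℝ) (hρ : 0 < ρ)
    (hreg : BohrRegular Γ ρ)
    (B' : Finset G) (hB'sub : B' ⊆ bohr Γ (ρ * δ)) (hB'ne : B'.Nonempty)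
    (hδ0 : 0 < δ) (hδ : δ ≤ ε / (24 * Γ.card)) :
    l1 (fun x => conv (mu (bohr Γ ρ)) (mu B') x - mu (bohr Γ ρ) x) ≤ ε := by
  -- for `Γ = ∅` the bound on `δ` reads `δ ≤ ε / 0 = 0`
  have hd : 0 < 24 * (Γ.card : ℝ) :=
    ((div_pos_iff.1 (hδ0.trans_le hδ)).resolve_right fun h => h.2.not_ge (by positivity)).2
  have hB : (bohr Γ ρ).Nonempty := ⟨0, zero_mem_bohr hρ.le⟩
  have hδε : 24 * Γ.card * δ ≤ ε := by rwa [le_div_iff₀' hd] at hδ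
  refine l1_conv_mu_sub_le hB'ne fun t ht => ?_
  rcases le_or_gt 2 ε with hε2 | hε2
  · exact (l1_translate_sub_le _ t).trans (by rwa [l1_mu hB, mul_one])
  · have hδd : δ ≤ 1 / (12 * Γ.card) := by
      rw [le_div_iff₀' (by linarith)]; linarith
    calc _ ≤ _ := l1_translate_mu_bohr_sub_le hρ.le hδ0.le (hB'sub ht)
      _ ≤ 24 * Γ.card * δ := by
        rw [div_le_iff₀ (by exact_mod_cast hB.card_pos)]
        exact hreg.card_sub_card_le hδ0.le hδd
      _ ≤ ε := hδε

/-- For a regular Bohr set `B` of dimension `d` and `B' ⊆ B_δ` with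
`δ ≤ ε/(24d)`, we have `‖μ_B * μ_{B'} - μ_B‖₁ ≤ ε`. -/
theorem bohr_convolution_l1 {G : Type*} [AddCommGroup G] [Fintype G]
    (Γ : Finset (AddChar G ℂ)) (ρ ε δ : ℝ) (hρ : 0 < ρ) (hρ2 : ρ ≤ 2)
    (hreg : BohrRegular Γ ρ) (hd : 0 < Γ.card)
    (B' : Finset G) (hB'sub : B' ⊆ bohr Γ (ρ * δ)) (hB'ne : B'.Nonempty)
    (hδ0 : 0 < δ) (hδ : δ ≤ ε / (24 * Γ.card)) :
    l1 (fun x => conv (mu (bohr Γ ρ)) (mu B') x - mu (bohr Γ ρ) x) ≤ ε :=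
  bohr_convolution_l1_general Γ ρ ε δ hρ hreg B' hB'sub hB'ne hδ0 hδ
end

section
/- Let p be prime, B ⊆ ℤ/pℤ a regular Bohr set of dimension d, A ⊆ B with |A| = α|B|, and suppose δ ≤ α/(240d) satisfies |B_{1+δ}| ≤ 1.01|B|. Then there exists x ∈ ℤ/pℤ such that |A ∩ (x + B_δ)| ≥ 0.9 α |B_δ|. -/
open scoped Classical BigOperators Pointwise

variable {G : Type*} [AddCommGroup G] [Fintype G]

/-!
Counting pairs gives `∑ x, |A ∩ (x + B_δ)| = |A| |B_δ|`, and the summand vanishes unless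
`x ∈ A - B_δ`. Since `|1 - γ|` satisfies the triangle inequality along characters,
`A - B_δ ⊆ B - B_δ ⊆ B_{1+δ}`, which has at most `1.01 |B|` elements, so averaging over it
yields a translate with `|A ∩ (x + B_δ)| ≥ α |B_δ| / 1.01`.
-/

open Finset

lemma AddChar.norm_one_sub_map_sub_le {H R : Type*} [AddGroup H] [Finite H] [NormedRing R]
    [NormMulClass R] [NormOneClass R] (γ : AddChar H R) (u v : H) :
    ‖1 - γ (u - v)‖ ≤ ‖1 - γ u‖ + ‖1 - γ v‖ :=
  calc ‖1 - γ (u - v)‖ = ‖(1 - γ (u - v)) * γ v‖ := by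
        rw [norm_mul, γ.norm_apply, mul_one]
    _ = ‖(1 - γ u) - (1 - γ v)‖ := by
      rw [← sub_add_cancel u v, AddChar.map_add_eq_mul, add_sub_cancel_right]; noncomm_ring
    _ ≤ ‖1 - γ u‖ + ‖1 - γ v‖ := norm_sub_le _ _

lemma zero_mem_bohr_s7 {Γ : Finset (AddChar G ℂ)} {ρ : ℝ} (hρ : 0 ≤ ρ) :
    0 ∈ bohr Γ ρ := by
  simpa [bohr] using fun _ _ => hρ

lemma sub_mem_bohr {Γ : Finset (AddChar G ℂ)} {ρ ρ' : ℝ} {x y : G} (hx : x ∈ bohr Γ ρ)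
    (hy : y ∈ bohr Γ ρ') : x - y ∈ bohr Γ (ρ + ρ') := by
  simp only [bohr, mem_filter, mem_univ, true_and] at hx hy ⊢
  exact fun γ hγ => (γ.norm_one_sub_map_sub_le x y).trans (add_le_add (hx γ hγ) (hy γ hγ))

section Averaging

variable {H : Type*} [AddGroup H] [DecidableEq H]

lemma card_filter_add_mem_eq_addConvolution (A S : Finset H) (x : H) :
    #{b ∈ S | x + b ∈ A} = A.addConvolution (-S) x := by
  rw [← card_inter_vadd, ← card_image_of_injective _ (add_right_injective x)]
  congr 1
  ext a
  simp only [mem_image, mem_filter, mem_inter, mem_vadd_finset, vadd_eq_add]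
  constructor
  · rintro ⟨b, ⟨hb, hxb⟩, rfl⟩
    exact ⟨hxb, b, hb, rfl⟩
  · rintro ⟨ha, b, hb, rfl⟩
    exact ⟨b, ⟨hb, ha⟩, rfl⟩

variable [Fintype H]

lemma sum_addConvolution (A B : Finset H) : ∑ x, A.addConvolution B x = #A * #B := by
  rw [← card_product]
  exact (card_eq_sum_card_fiberwise fun _ _ => mem_univ _).symm

lemma exists_card_mul_card_le_card_add_mul_addConvolution (A B : Finset H) :
    ∃ x, #A * #B ≤ #(A + B) * A.addConvolution B x := by
  obtain hAB | hAB := (A + B).eq_empty_or_nonempty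
  · obtain rfl | rfl := add_eq_empty.1 hAB <;> exact ⟨0, by simp⟩
  have hsum : ∑ x ∈ A + B, A.addConvolution B x = #A * #B := by
    rw [← sum_addConvolution]
    exact sum_subset (subset_univ _) fun x _ hx => addConvolution_eq_zero.2 hx
  obtain ⟨x, -, hx⟩ := exists_le_of_sum_le hAB (f := fun _ => #A * #B)
    (g := fun x => #(A + B) * A.addConvolution B x)
    (by rw [sum_const, ← mul_sum, hsum, smul_eq_mul])
  exact ⟨x, hx⟩

end Averaging

theorem high_density_small_bohr_set_general (p : ℕ) [Fact p.Prime]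
    (Γ : Finset (AddChar (ZMod p) ℂ)) (ρ α δ : ℝ) (hρ0 : 0 < ρ)
    (A : Finset (ZMod p)) (hA : A ⊆ bohr Γ ρ)
    (hAcard : (A.card : ℝ) = α * (bohr Γ ρ).card)
    (hgrow : ((bohr Γ (ρ * (1 + δ))).card : ℝ) ≤ 1.01 * (bohr Γ ρ).card) :
    ∃ x : ZMod p, 0.9 * α * ((bohr Γ (ρ * δ)).card : ℝ) ≤
      (((bohr Γ (ρ * δ)).filter (fun b => x + b ∈ A)).card : ℝ) := by
  set B := bohr Γ ρ
  set S := bohr Γ (ρ * δ)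
  obtain ⟨x, hx⟩ := exists_card_mul_card_le_card_add_mul_addConvolution A (-S)
  have hAS : A + -S ⊆ bohr Γ (ρ * (1 + δ)) := by
    rw [← sub_eq_add_neg, mul_one_add]
    intro z hz
    obtain ⟨a, ha, b, hb, rfl⟩ := mem_sub.1 hz
    exact sub_mem_bohr (hA ha) hb
  have hB : (0 : ℝ) < #B := by exact_mod_cast card_pos.2 ⟨0, zero_mem_bohr_s7 hρ0.le⟩
  rw [card_neg] at hx
  set c := A.addConvolution (-S) x
  have hT : (#(A + -S) : ℝ) ≤ 1.01 * #B := (Nat.cast_le.2 (card_le_card hAS)).trans hgrow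
  have hc : α * #S ≤ 1.01 * c := by
    refine le_of_mul_le_mul_left ?_ hB
    calc (#B : ℝ) * (α * #S) = #A * #S := by rw [hAcard]; ring
      _ ≤ #(A + -S) * c := by exact_mod_cast hx
      _ ≤ 1.01 * #B * c := by gcongr
      _ = #B * (1.01 * c) := by ring
  refine ⟨x, ?_⟩
  rw [card_filter_add_mem_eq_addConvolution]
  linarith [(Nat.cast_nonneg c : (0 : ℝ) ≤ c)]

/-- a dense subset `A` of a regular Bohr set `B` has a translate of the
dilate `B_δ` (with `δ ≤ α/(240d)`, `|B_{1+δ}| ≤ 1.01|B|`) in which `A` has density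
at least `0.9α`. -/
theorem high_density_small_bohr_set (p : ℕ) [Fact p.Prime]
    (Γ : Finset (AddChar (ZMod p) ℂ)) (ρ α δ : ℝ) (hρ0 : 0 < ρ) (hρ2 : ρ ≤ 2)
    (hreg : BohrRegular Γ ρ) (A : Finset (ZMod p)) (hA : A ⊆ bohr Γ ρ)
    (hAcard : (A.card : ℝ) = α * (bohr Γ ρ).card) (hα : 0 < α)
    (hδ0 : 0 < δ) (hδ : δ ≤ α / (240 * Γ.card))
    (hgrow : ((bohr Γ (ρ * (1 + δ))).card : ℝ) ≤ 1.01 * (bohr Γ ρ).card) :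
    ∃ x : ZMod p, 0.9 * α * ((bohr Γ (ρ * δ)).card : ℝ) ≤
      (((bohr Γ (ρ * δ)).filter (fun b => x + b ∈ A)).card : ℝ) :=
  high_density_small_bohr_set_general p Γ ρ α δ hρ0 A hA hAcard hgrow
end

section
/- For every k ≥ 4 and all sufficiently small α > 0, there exist infinitely many integers N ≥ 1 and sets A ⊆ {1, 2, …, N} with |A| ≥ αN such that the number of tuples (x_1, …, x_k) ∈ A^k satisfying x_1 + x_2 + ⋯ + x_{k−1} = (k−1)x_k is at most exp(−c log²(2/α)) N^{k−1}, for an absolute constant c > 0. -/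
/-!
Write `k = m + 1`. Behrend's construction is run in base `m d` with digits below `d`: a sum of `m`
such numbers has no carries, so a solution among the images of lattice points on a sphere lifts
to a solution among the points themselves, which strict convexity of the sphere forces to be
trivial. With `d ≈ e^{L/4}` and `n ≈ L / 4(m - 1)` digits, where `L = log (2 / α)`, the densest
sphere has density at least `(m + 1) α` in `[1, N]`, `N = (m d)^n`, while its `|A| ≤ N` trivial
solutions are at most `e^{-L²/16} N^m`.

To get infinitely many `N`, take `t` translates `A + C j` with `C = (m + 1) N`. As `C > m max A`,
the residues mod `C` of a solution form a solution in `A`, hence are all equal, and the quotients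
form a solution in `[0, t)` determined by its first `m` entries: at most `|A| t^m` solutions.
-/

open Finset Real

section AvgEquation

variable {M : Type*}

def IsAvgSolution [AddCommMonoid M] (m : ℕ) (x : Fin (m + 1) → M) : Prop :=
  ∑ i : Fin m, x i.castSucc = m • x (Fin.last m)

instance [AddCommMonoid M] [DecidableEq M] (m : ℕ) :
    DecidablePred (IsAvgSolution m : (Fin (m + 1) → M) → Prop) :=
  fun _ => decEq _ _

def avgSolutions (m : ℕ) (A : Finset ℕ) : Finset (Fin (m + 1) → ℕ) :=
  (Fintype.piFinset fun _ => A).filter (IsAvgSolution m)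

def HasOnlyTrivialAvgSolutions (m : ℕ) (A : Finset ℕ) : Prop :=
  ∀ x : Fin (m + 1) → ℕ, (∀ i, x i ∈ A) → IsAvgSolution m x → ∀ i, x i = x (Fin.last m)

theorem IsAvgSolution.map {N : Type*} [AddCommMonoid M] [AddCommMonoid N] (f : M →+ N) {m : ℕ}
    {x : Fin (m + 1) → M} (h : IsAvgSolution m x) : IsAvgSolution m (f ∘ x) := by
  simpa only [IsAvgSolution, Function.comp_apply, map_sum, map_nsmul] using congrArg f h

theorem isAvgSolution_add_const_iff [AddCancelCommMonoid M] {m : ℕ} {x : Fin (m + 1) → M}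
    (c : M) : IsAvgSolution m (fun i => x i + c) ↔ IsAvgSolution m x := by
  simp [IsAvgSolution, sum_add_distrib, smul_add]

/-- The squared deviations from the mean `v (Fin.last m)` sum to zero. -/
theorem IsAvgSolution.eq_last_of_sum_sq_eq {R κ : Type*} [CommRing R] [LinearOrder R]
    [IsStrictOrderedRing R] [Fintype κ] {m : ℕ} {v : Fin (m + 1) → κ → R}
    (hv : IsAvgSolution m v) (hsq : ∀ i, ∑ j, v i j ^ 2 = ∑ j, v (Fin.last m) j ^ 2)
    (i : Fin (m + 1)) : v i = v (Fin.last m) := by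
  set z := v (Fin.last m)
  have hcoord : ∀ j, ∑ i : Fin m, v i.castSucc j = m * z j := fun j => by
    simpa [nsmul_eq_mul] using congrFun hv j
  have hdev_i : ∀ i : Fin m, ∑ j, (v i.castSucc j - z j) ^ 2
      = 2 * ∑ j, z j ^ 2 - 2 * ∑ j, v i.castSucc j * z j := fun i => by
    simp only [sub_sq, sum_add_distrib, sum_sub_distrib, mul_assoc, ← mul_sum, hsq]
    ring
  have hcross : ∑ i : Fin m, ∑ j, v i.castSucc j * z j = m * ∑ j, z j ^ 2 := by
    rw [sum_comm, mul_sum]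
    exact sum_congr rfl fun j _ => by rw [← sum_mul, hcoord, sq, mul_assoc]
  have hdev : ∑ i : Fin m, ∑ j, (v i.castSucc j - z j) ^ 2 = 0 := by
    rw [sum_congr rfl fun i _ => hdev_i i, sum_sub_distrib, ← mul_sum, ← mul_sum, hcross]
    simp
  induction i using Fin.lastCases with
  | last => rfl
  | cast i =>
    funext j
    have hi := (sum_eq_zero_iff_of_nonneg fun i _ => sum_nonneg fun j _ => sq_nonneg _).1 hdev i
      (mem_univ _)
    have hij := (sum_eq_zero_iff_of_nonneg fun j _ => sq_nonneg _).1 hi j (mem_univ _)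
    exact sub_eq_zero.1 (pow_eq_zero_iff two_ne_zero |>.1 hij)

end AvgEquation

namespace Behrend

theorem map_lt_pow {n d : ℕ} {x : Fin n → ℕ} (hx : ∀ i, x i < d) : map d x < d ^ n := by
  induction n with
  | zero => simp
  | succ n ih =>
    rw [map_succ', pow_succ]
    have := ih (x := x ∘ Fin.succ) fun i => hx i.succ
    nlinarith [hx 0]

theorem eq_last_of_isAvgSolution {m n d r : ℕ} {v : Fin (m + 1) → Fin n → ℕ}
    (hv : ∀ i, v i ∈ sphere n d r) (h : IsAvgSolution m v) (i : Fin (m + 1)) :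
    v i = v (Fin.last m) := by
  set f := (Nat.castAddMonoidHom ℤ).compLeft (Fin n)
  have hsq : ∀ i, ∑ j, v i j ^ 2 = r := fun i => (mem_filter.1 (hv i)).2
  have hsq' : ∀ i, ∑ j, (f ∘ v) i j ^ 2 = ∑ j, (f ∘ v) (Fin.last m) j ^ 2 := fun i => by
    simp only [f, Function.comp_apply, AddMonoidHom.compLeft_apply, Nat.coe_castAddMonoidHom]
    exact_mod_cast (hsq i).trans (hsq _).symm
  funext j
  simpa [f] using congrFun ((h.map f).eq_last_of_sum_sq_eq hsq' i) j

/-- With digits below `d` in base `m * d`, a sum of `m` numbers has no carries. -/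
theorem isAvgSolution_of_map {m n d : ℕ} (hm : 0 < m) {v : Fin (m + 1) → Fin n → ℕ}
    (hv : ∀ i j, v i j < d) (h : IsAvgSolution m (map (m * d) ∘ v)) : IsAvgSolution m v := by
  refine map_injOn (d := m * d) (fun j => ?_) (fun j => ?_) ?_
  · calc (∑ i : Fin m, v i.castSucc) j = ∑ i : Fin m, v i.castSucc j := sum_apply _ _ _
      _ < ∑ _i : Fin m, d := sum_lt_sum_of_nonempty (univ_nonempty_iff.2 ⟨⟨0, hm⟩⟩)
          fun i _ => hv _ j
      _ = m * d := by simp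
  · exact Nat.mul_lt_mul_of_pos_left (hv _ j) hm
  · simpa only [IsAvgSolution, Function.comp_apply, map_sum, map_nsmul] using h

end Behrend

def behrendSet (m n d r : ℕ) : Finset ℕ :=
  (Behrend.sphere n d r).image fun v => Behrend.map (m * d) v + 1

section behrendSet

variable {m n d r : ℕ}

theorem lt_mul_of_mem_sphere (hm : 0 < m) {v : Fin n → ℕ} (hv : v ∈ Behrend.sphere n d r)
    (j : Fin n) : v j < m * d :=
  (Behrend.mem_box.1 (Behrend.sphere_subset_box hv) j).trans_le (Nat.le_mul_of_pos_left d hm)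

theorem behrendSet_subset_Icc (hm : 0 < m) : behrendSet m n d r ⊆ Icc 1 ((m * d) ^ n) := by
  simp only [behrendSet, image_subset_iff, mem_Icc]
  exact fun v hv => ⟨Nat.le_add_left _ _, Behrend.map_lt_pow (lt_mul_of_mem_sphere hm hv)⟩

theorem card_behrendSet (hm : 0 < m) : #(behrendSet m n d r) = #(Behrend.sphere n d r) :=
  card_image_of_injOn fun _ hv _ hw h =>
    Behrend.map_injOn (lt_mul_of_mem_sphere hm hv) (lt_mul_of_mem_sphere hm hw)
      (Nat.add_right_cancel h)

theorem hasOnlyTrivialAvgSolutions_behrendSet (hm : 0 < m) :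
    HasOnlyTrivialAvgSolutions m (behrendSet m n d r) := by
  intro x hx hsol
  choose v hv hxv using fun i => mem_image.1 (hx i)
  obtain rfl : x = fun i => Behrend.map (m * d) (v i) + 1 := funext fun i => (hxv i).symm
  rw [isAvgSolution_add_const_iff] at hsol
  have hdig i j : v i j < d := Behrend.mem_box.1 (Behrend.sphere_subset_box (hv i)) j
  intro i
  dsimp only
  rw [Behrend.eq_last_of_isAvgSolution hv (Behrend.isAvgSolution_of_map hm hdig hsol) i]

end behrendSet

theorem IsAvgSolution.div_mod {m C : ℕ} {x : Fin (m + 1) → ℕ} (h : IsAvgSolution m x)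
    (hsum : ∑ i : Fin m, x i.castSucc % C < C) (hlast : m * (x (Fin.last m) % C) < C) :
    IsAvgSolution m (fun i => x i / C) ∧ IsAvgSolution m (fun i => x i % C) := by
  have hC : 0 < C := (Nat.zero_le _).trans_lt hlast
  have hS : (∑ i : Fin m, x i.castSucc) / C = ∑ i : Fin m, x i.castSucc / C ∧
      (∑ i : Fin m, x i.castSucc) % C = ∑ i : Fin m, x i.castSucc % C :=
    (Nat.div_mod_unique hC).2 ⟨by
      rw [mul_sum, ← sum_add_distrib]; exact sum_congr rfl fun i _ => Nat.mod_add_div _ _, hsum⟩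
  have hL : m * x (Fin.last m) / C = m * (x (Fin.last m) / C) ∧
      m * x (Fin.last m) % C = m * (x (Fin.last m) % C) :=
    (Nat.div_mod_unique hC).2 ⟨by rw [mul_left_comm, ← mul_add, Nat.mod_add_div], hlast⟩
  simp only [IsAvgSolution, smul_eq_mul] at h ⊢
  rw [h] at hS
  exact ⟨hS.1.symm.trans hL.1, hS.2.symm.trans hL.2⟩

def blowUp (C t : ℕ) (A : Finset ℕ) : Finset ℕ :=
  (range t ×ˢ A).image fun p => p.2 + C * p.1

section blowUp

variable {C t N : ℕ} {A : Finset ℕ}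

theorem div_lt_and_mod_mem_of_mem_blowUp (hA : ∀ a ∈ A, a < C) {x : ℕ}
    (hx : x ∈ blowUp C t A) : x / C < t ∧ x % C ∈ A := by
  obtain ⟨⟨j, a⟩, hja, rfl⟩ := mem_image.1 hx
  rw [mem_product, mem_range] at hja
  obtain ⟨hdiv, hmod⟩ : (a + C * j) / C = j ∧ (a + C * j) % C = a :=
    (Nat.div_mod_unique ((Nat.zero_le a).trans_lt (hA a hja.2))).2 ⟨rfl, hA a hja.2⟩
  simp only [hdiv, hmod]
  exact hja

theorem card_blowUp (hA : ∀ a ∈ A, a < C) : #(blowUp C t A) = t * #A := by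
  rw [blowUp, card_image_of_injOn, card_product, card_range]
  rintro ⟨j, a⟩ hja ⟨j', a'⟩ hja' h
  simp only [coe_product, Set.mem_prod, mem_coe] at hja hja' h
  have hC := (Nat.zero_le a).trans_lt (hA a hja.2)
  obtain ⟨hdiv, hmod⟩ := (Nat.div_mod_unique hC).2 ⟨rfl, hA a hja.2⟩
  obtain ⟨hdiv', hmod'⟩ := (Nat.div_mod_unique hC).2 ⟨rfl, hA a' hja'.2⟩
  rw [h] at hdiv hmod
  exact Prod.ext (hdiv.symm.trans hdiv') (hmod.symm.trans hmod')

theorem blowUp_subset_Icc (hA : A ⊆ Icc 1 N) (hNC : N ≤ C) : blowUp C t A ⊆ Icc 1 (C * t) := by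
  simp only [blowUp, image_subset_iff, mem_product, mem_range, mem_Icc, and_imp, Prod.forall]
  intro j a hj ha
  obtain ⟨ha₁, haN⟩ := mem_Icc.1 (hA ha)
  refine ⟨by omega, ?_⟩
  calc a + C * j ≤ C * (j + 1) := by linarith
    _ ≤ C * t := Nat.mul_le_mul_left C hj

theorem div_mod_of_mem_avgSolutions_blowUp {m : ℕ} (hm : 0 < m) (hA : ∀ a ∈ A, a ≤ N)
    (hC : m * N < C) (htriv : HasOnlyTrivialAvgSolutions m A) {x : Fin (m + 1) → ℕ}
    (hx : x ∈ avgSolutions m (blowUp C t A)) :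
    (∀ i, x i / C < t) ∧ (∀ i, x i % C = x (Fin.last m) % C) ∧ x (Fin.last m) % C ∈ A ∧
      IsAvgSolution m (fun i => x i / C) := by
  rw [avgSolutions, mem_filter, Fintype.mem_piFinset] at hx
  have hdm i := div_lt_and_mod_mem_of_mem_blowUp (fun a ha =>
    (hA a ha).trans_lt ((Nat.le_mul_of_pos_left N hm).trans_lt hC)) (hx.1 i)
  have hsum : ∑ i : Fin m, x i.castSucc % C < C := by
    refine (sum_le_card_nsmul univ _ N fun i _ => hA _ (hdm _).2).trans_lt ?_
    simpa using hC
  have hlast : m * (x (Fin.last m) % C) < C :=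
    (Nat.mul_le_mul_left m (hA _ (hdm _).2)).trans_lt hC
  obtain ⟨hq, hr⟩ := hx.2.div_mod hsum hlast
  exact ⟨fun i => (hdm i).1, htriv _ (fun i => (hdm i).2) hr, (hdm _).2, hq⟩

theorem card_avgSolutions_blowUp_le {m : ℕ} (hm : 0 < m) (hA : ∀ a ∈ A, a ≤ N) (hC : m * N < C)
    (htriv : HasOnlyTrivialAvgSolutions m A) :
    #(avgSolutions m (blowUp C t A)) ≤ #A * t ^ m := by
  have hsol x (hx : x ∈ avgSolutions m (blowUp C t A)) :=
    div_mod_of_mem_avgSolutions_blowUp hm hA hC htriv hx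
  calc #(avgSolutions m (blowUp C t A))
      ≤ #(A ×ˢ Fintype.piFinset fun _ : Fin m => range t) := by
        refine card_le_card_of_injOn (fun x => (x (Fin.last m) % C, fun i => x i.castSucc / C))
          (fun x hx => ?_) (fun x hx y hy hxy => ?_)
        · obtain ⟨hq, -, hr, -⟩ := hsol x hx
          simp [hr, hq]
        · obtain ⟨-, hxr, -, hxq⟩ := hsol x hx
          obtain ⟨-, hyr, -, hyq⟩ := hsol y hy
          simp only [Prod.mk.injEq, funext_iff] at hxy
          have hq_last : x (Fin.last m) / C = y (Fin.last m) / C := by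
            simp only [IsAvgSolution, smul_eq_mul] at hxq hyq
            refine Nat.eq_of_mul_eq_mul_left hm ?_
            rw [← hxq, ← hyq]
            exact sum_congr rfl fun i _ => hxy.2 i
          funext i
          have hq : x i / C = y i / C := by
            induction i using Fin.lastCases with
            | last => exact hq_last
            | cast i => exact hxy.2 i
          rw [← Nat.mod_add_div (x i) C, ← Nat.mod_add_div (y i) C, hxr, hyr, hxy.1, hq]
    _ = #A * t ^ m := by simp [card_product]

end blowUp

/-- `m ≤ e^{m-1}` lets `a = m - 1` play the role of `log m` in the choice of `n`. -/
theorem exists_behrend_params {m : ℕ} (hm : 2 ≤ m) :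
    ∃ L₀ : ℝ, ∀ L, L₀ ≤ L → ∃ n d : ℕ, 0 < n ∧ 0 < d ∧
      2 * exp (-L) * ((m + 1) * n * m ^ n * d ^ 2) ≤ 1 ∧
      exp (1 / 16 * L ^ 2) ≤ (d : ℝ) ^ (n * (m - 1)) := by
  set a : ℝ := m - 1
  have ha : 1 ≤ a := by
    have : (2 : ℝ) ≤ m := by exact_mod_cast hm
    linarith
  refine ⟨16 * a + 1032, fun L hL => ?_⟩
  have hL0 : 0 < L := by linarith
  set n := ⌈L / (4 * a)⌉₊
  set d := ⌈exp (L / 4)⌉₊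
  have hn₁ : L / 4 ≤ n * a := by
    have := (div_le_iff₀ (by positivity)).1 (Nat.le_ceil (L / (4 * a)))
    linarith
  have hn₂ : n * a < L / 4 + a := by
    have := (lt_div_iff₀ (by positivity)).1
      (sub_lt_iff_lt_add.2 (Nat.ceil_lt_add_one (by positivity : 0 ≤ L / (4 * a))))
    linarith
  have hd₁ : exp (L / 4) ≤ d := Nat.le_ceil _
  have hd₂ : (d : ℝ) < exp (L / 4) + 1 := Nat.ceil_lt_add_one (exp_pos _).le
  refine ⟨n, d, Nat.ceil_pos.2 (by positivity), Nat.ceil_pos.2 (exp_pos _), ?_, ?_⟩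
  · have hm1 : (m + 1 : ℝ) ≤ exp (a + 1) := by linarith [add_one_le_exp (a + 1)]
    have hmn : (m : ℝ) ^ n ≤ exp (L / 4 + a) := calc
      (m : ℝ) ^ n ≤ exp a ^ n := by gcongr; linarith [add_one_le_exp a]
      _ = exp (n * a) := (exp_nat_mul a n).symm
      _ ≤ exp (L / 4 + a) := exp_le_exp.2 hn₂.le
    have hnL : (n : ℝ) ≤ L := by nlinarith
    have hd2 : (d : ℝ) ^ 2 ≤ 4 * exp (L / 4) ^ 2 := by
      nlinarith [one_le_exp (by positivity : 0 ≤ L / 4)]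
    have hL8 : 8 * L ≤ exp (L / 8) := by
      nlinarith [quadratic_le_exp_of_nonneg (by positivity : 0 ≤ L / 8)]
    have hexp : exp (-L) * exp (a + 1) * exp (L / 4 + a) * exp (L / 4) ^ 2
        = exp (2 * a + 1) * exp (-(L / 4)) := by
      simp only [sq, ← exp_add]
      ring_nf
    calc 2 * exp (-L) * ((m + 1) * n * m ^ n * d ^ 2)
        ≤ 2 * exp (-L) * (exp (a + 1) * L * exp (L / 4 + a) * (4 * exp (L / 4) ^ 2)) := by
          gcongr
      _ = 8 * L * exp (2 * a + 1) * exp (-(L / 4)) := by linear_combination (8 * L) * hexp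
      _ ≤ exp (L / 8) * exp (L / 8) * exp (-(L / 4)) := by
          gcongr
          linarith
      _ = 1 := by
          rw [← exp_add, ← exp_add, ← exp_zero]
          ring_nf
  · calc exp (1 / 16 * L ^ 2) ≤ exp ((n * a : ℝ) * (L / 4)) := exp_le_exp.2 (by nlinarith)
      _ = exp (L / 4) ^ (n * (m - 1)) := by
          rw [← exp_nat_mul]
          push_cast [Nat.cast_sub (by omega : 1 ≤ m)]
          ring
      _ ≤ (d : ℝ) ^ (n * (m - 1)) := by gcongr

theorem exists_behrendSet {m : ℕ} (hm : 2 ≤ m) :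
    ∃ α₀ : ℝ, 0 < α₀ ∧ ∀ α : ℝ, 0 < α → α ≤ α₀ →
      ∃ N : ℕ, 0 < N ∧ ∃ A ⊆ Icc 1 N, HasOnlyTrivialAvgSolutions m A ∧
        α * ((m + 1) * N) ≤ #A ∧ exp (1 / 16 * log (2 / α) ^ 2) ≤ (N : ℝ) ^ (m - 1) := by
  obtain ⟨L₀, hL₀⟩ := exists_behrend_params hm
  refine ⟨2 * exp (-L₀), by positivity, fun α hα hαα₀ => ?_⟩
  set L := log (2 / α)
  have hα_eq : α = 2 * exp (-L) := by
    rw [exp_neg, exp_log (by positivity)]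
    field_simp
  have hL : L₀ ≤ L := by
    rw [le_log_iff_exp_le (by positivity), le_div_iff₀ hα]
    calc exp L₀ * α ≤ exp L₀ * (2 * exp (-L₀)) := by gcongr
      _ = 2 := by rw [exp_neg]; field_simp
  obtain ⟨n, d, hn, hd, hdense, hcount⟩ := hL₀ L hL
  obtain ⟨r, hr⟩ := Behrend.exists_large_sphere n d
  have hm0 : 0 < m := by omega
  refine ⟨(m * d) ^ n, by positivity, behrendSet m n d r, behrendSet_subset_Icc hm0,
    hasOnlyTrivialAvgSolutions_behrendSet hm0, ?_, ?_⟩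
  · rw [card_behrendSet hm0]
    refine le_trans ?_ hr
    rw [le_div_iff₀ (by positivity)]
    push_cast
    calc (α * ((m + 1) * (m * d) ^ n) * (n * d ^ 2) : ℝ)
        = 2 * exp (-L) * ((m + 1) * n * m ^ n * d ^ 2) * d ^ n := by rw [hα_eq, mul_pow]; ring
      _ ≤ 1 * d ^ n := by gcongr
      _ = (d : ℝ) ^ n := one_mul _
  · refine hcount.trans ?_
    push_cast
    rw [← pow_mul, mul_comm n]
    gcongr
    exact le_mul_of_one_le_left (Nat.cast_nonneg _) (by exact_mod_cast hm0)

theorem card_avgSolutions_blowUp_le_inv_mul_pow {m N t : ℕ} {A : Finset ℕ} {E : ℝ}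
    (hm : 0 < m) (hN : 0 < N) (hA : A ⊆ Icc 1 N) (htriv : HasOnlyTrivialAvgSolutions m A)
    (hE : 0 < E) (hEN : E ≤ (N : ℝ) ^ (m - 1)) :
    (#(avgSolutions m (blowUp ((m + 1) * N) t A)) : ℝ)
      ≤ E⁻¹ * (((m + 1) * N * t : ℕ) : ℝ) ^ m := by
  have hcard : #(avgSolutions m (blowUp ((m + 1) * N) t A)) ≤ N * t ^ m :=
    (card_avgSolutions_blowUp_le hm (fun a ha => (mem_Icc.1 (hA ha)).2) (by nlinarith) htriv).trans
      (Nat.mul_le_mul_right _ (by simpa using card_le_card hA))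
  rw [le_inv_mul_iff₀ hE]
  calc E * #(avgSolutions m (blowUp ((m + 1) * N) t A))
      ≤ (N : ℝ) ^ (m - 1) * (N * t ^ m) := by gcongr; exact_mod_cast hcard
    _ = ((N * t : ℕ) : ℝ) ^ m := by
      push_cast
      rw [← mul_assoc, ← pow_succ, Nat.sub_add_cancel hm, mul_pow]
    _ ≤ (((m + 1) * N * t : ℕ) : ℝ) ^ m := by
      gcongr
      nlinarith

theorem filter_eq_avgSolutions (m : ℕ) (A : Finset ℕ) (h : m + 1 - 1 < m + 1) :
    ((Fintype.piFinset fun _ : Fin (m + 1) => A).filter fun x =>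
      (∑ i ∈ univ.filter fun i : Fin (m + 1) => (i : ℕ) < m + 1 - 1, x i)
        = (m + 1 - 1) * x ⟨m + 1 - 1, h⟩) = avgSolutions m A := by
  refine filter_congr fun x _ => ?_
  have hlast : (⟨m + 1 - 1, h⟩ : Fin (m + 1)) = Fin.last m := Fin.ext (by simp)
  rw [hlast, sum_filter, Fin.sum_univ_castSucc]
  simp [IsAvgSolution]

/-- Behrend-type construction: there is an absolute constant `c > 0`
such that for every `k ≥ 4` and all sufficiently small `α > 0`, there are infinitely
many `N ≥ 1` with a set `A ⊆ {1, …, N}`, `|A| ≥ αN`, containing at most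
`exp(-c log²(2/α)) N^{k-1}` solutions of `x₁ + ⋯ + x_{k-1} = (k-1)x_k`. -/
theorem behrend_type_construction :
    ∃ c : ℝ, 0 < c ∧
      ∀ (k : ℕ) (hk : 4 ≤ k),
        ∃ α₀ : ℝ, 0 < α₀ ∧
          ∀ α : ℝ, 0 < α → α ≤ α₀ →
            {N : ℕ | 1 ≤ N ∧
              ∃ A ⊆ Finset.Icc 1 N, α * N ≤ (A.card : ℝ) ∧
                ((((Fintype.piFinset fun _ : Fin k => A).filter fun x =>
                    (∑ i ∈ Finset.univ.filter fun i : Fin k => (i : ℕ) < k - 1, x i)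
                      = (k - 1) * x ⟨k - 1, by omega⟩).card : ℝ)
                  ≤ Real.exp (-(c * (Real.log (2 / α)) ^ 2)) * (N : ℝ) ^ (k - 1))}.Infinite := by
  refine ⟨1 / 16, by norm_num, fun k hk => ?_⟩
  obtain ⟨m, rfl⟩ : ∃ m, k = m + 1 := ⟨k - 1, by omega⟩
  obtain ⟨α₀, hα₀, hbase⟩ := exists_behrendSet (m := m) (by omega)
  refine ⟨α₀, hα₀, fun α hα hαα₀ => ?_⟩
  obtain ⟨N, hN, A, hAN, htriv, hdense, hcount⟩ := hbase α hα hαα₀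
  have hC : 0 < (m + 1) * N := by positivity
  refine Set.infinite_of_injective_forall_mem (f := fun t => (m + 1) * N * (t + 1))
    (fun t t' h => by simpa [hC.ne'] using h) fun t => ?_
  refine ⟨Nat.mul_pos hC t.succ_pos, blowUp ((m + 1) * N) (t + 1) A,
    blowUp_subset_Icc hAN (by nlinarith), ?_, ?_⟩
  · rw [card_blowUp fun a ha => by nlinarith [(mem_Icc.1 (hAN ha)).2]]
    push_cast
    nlinarith
  · rw [filter_eq_avgSolutions, exp_neg, Nat.add_sub_cancel]
    exact card_avgSolutions_blowUp_le_inv_mul_pow (by omega) hN hAN htriv (exp_pos _) hcount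
end

section
/- Let M ≥ 2, d ≥ 1, k ≥ 3, and let D : ℕ → ℤ^d send n to the vector of its last d base-M digits, D(n)_i = ⌊n/M^{i−1}⌋ mod M for 1 ≤ i ≤ d. Let A ⊆ {1,…,N} be a set of integers all of whose images under D lie on a common sphere {v ∈ ℤ^d : ||v||₂² = r} and have all coordinates strictly less than M/k. Then every solution (x_1, …, x_k) ∈ A^k of x_1 + ⋯ + x_{k−1} = (k−1)x_k satisfies D(x_1) = D(x_2) = ⋯ = D(x_k). -/
/-! If the base-`M` digits of `x₁, …, x_k` are all `< M/k`, adding up to `k` of them produces no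
carries, so `x₁ + ⋯ + x_{k-1} = (k-1)x_k` holds digitwise: `D(x₁) + ⋯ + D(x_{k-1}) = (k-1)D(x_k)`.
Since all `D(xᵢ)` lie on one sphere, `∑ ‖D(xᵢ) - D(x_k)‖² = 2(k-1)r - 2⟪∑ D(xᵢ), D(x_k)⟫ = 0`,
so every `D(xᵢ)` equals `D(x_k)`. -/

open scoped Classical BigOperators

/-- The vector of the last `d` base-`M` digits of `n`: `D(n)_i = ⌊n / M^i⌋ mod M`
(indices `0 ≤ i < d`, corresponding to `M^{i-1}` with `1`-based indexing). -/
def digitVec (M d : ℕ) (n : ℕ) : Fin d → ℕ := fun i => n / M ^ (i : ℕ) % M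

open Finset

section Convexity

variable {ι κ : Type*} [Fintype κ] {s : Finset ι}

theorem eq_of_sum_eq_card_smul_of_dotProduct_self_eq {R : Type*} [CommRing R] [LinearOrder R]
    [IsStrictOrderedRing R] {v : ι → κ → R} {w : κ → R}
    (hv : ∀ i ∈ s, v i ⬝ᵥ v i = w ⬝ᵥ w) (hsum : ∑ i ∈ s, v i = #s • w) :
    ∀ i ∈ s, v i = w := by
  have hdist : ∑ i ∈ s, (v i - w) ⬝ᵥ (v i - w) = 0 :=
    calc ∑ i ∈ s, (v i - w) ⬝ᵥ (v i - w) = ∑ i ∈ s, (2 * (w ⬝ᵥ w) - 2 * (v i ⬝ᵥ w)) := by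
          refine sum_congr rfl fun i hi => ?_
          rw [sub_dotProduct, dotProduct_sub, dotProduct_sub, hv i hi, dotProduct_comm w (v i)]
          ring
      _ = 2 * (#s • (w ⬝ᵥ w) - (∑ i ∈ s, v i) ⬝ᵥ w) := by
          rw [sum_sub_distrib, sum_const, sum_dotProduct, ← mul_sum, mul_sub, mul_smul_comm]
      _ = 0 := by rw [hsum, smul_dotProduct, sub_self, mul_zero]
  intro i hi
  have hi0 := (sum_eq_zero_iff_of_nonneg fun i _ =>
    sum_nonneg fun j _ => mul_self_nonneg ((v i - w) j)).1 hdist i hi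
  exact sub_eq_zero.1 (dotProduct_self_eq_zero.1 hi0)

theorem Nat.eq_of_sum_eq_card_smul_of_dotProduct_self_eq {v : ι → κ → ℕ} {w : κ → ℕ}
    (hv : ∀ i ∈ s, v i ⬝ᵥ v i = w ⬝ᵥ w) (hsum : ∑ i ∈ s, v i = #s • w) :
    ∀ i ∈ s, v i = w := by
  let f := Nat.castRingHom ℤ
  have hsum' : ∑ i ∈ s, ⇑f ∘ v i = #s • (⇑f ∘ w) := by
    ext j
    simpa [Finset.sum_apply, f] using congrArg (fun u : κ → ℕ => (u j : ℤ)) hsum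
  have key := _root_.eq_of_sum_eq_card_smul_of_dotProduct_self_eq
    (fun i hi => by rw [← f.map_dotProduct, ← f.map_dotProduct, hv i hi]) hsum'
  exact fun i hi => funext fun j => Nat.cast_injective (congrFun (key i hi) j)

end Convexity

section NoCarry

variable {ι : Type*} (s : Finset ι) (a : ι → ℕ) {M : ℕ}

theorem sum_mod_pow_lt_of_digit_sums_lt {j : ℕ} (h : ∀ t < j, ∑ i ∈ s, a i / M ^ t % M < M) :
    ∑ i ∈ s, a i % M ^ j < M ^ j := by
  induction j with
  | zero => simp [Nat.mod_one]
  | succ j ih =>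
    have hlow := ih fun t ht => h t (Nat.lt_succ_of_lt ht)
    have hdigit : ∑ i ∈ s, a i / M ^ j % M + 1 ≤ M := h j (Nat.lt_succ_self j)
    calc ∑ i ∈ s, a i % M ^ (j + 1)
        = ∑ i ∈ s, a i % M ^ j + M ^ j * ∑ i ∈ s, a i / M ^ j % M := by
          simp only [Nat.mod_pow_succ, sum_add_distrib, mul_sum]
      _ < M ^ j * (∑ i ∈ s, a i / M ^ j % M + 1) := by rw [mul_add_one]; omega
      _ ≤ M ^ (j + 1) := by rw [pow_succ]; exact Nat.mul_le_mul_left _ hdigit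

theorem sum_mod_pow_of_digit_sums_lt {j : ℕ} (h : ∀ t < j, ∑ i ∈ s, a i / M ^ t % M < M) :
    (∑ i ∈ s, a i) % M ^ j = ∑ i ∈ s, a i % M ^ j := by
  rw [sum_nat_mod]
  exact Nat.mod_eq_of_lt (sum_mod_pow_lt_of_digit_sums_lt s a h)

theorem sum_digit_of_digit_sums_lt {j : ℕ} (h : ∀ t ≤ j, ∑ i ∈ s, a i / M ^ t % M < M) :
    (∑ i ∈ s, a i) / M ^ j % M = ∑ i ∈ s, a i / M ^ j % M := by
  have hM : 0 < M := (Nat.zero_le _).trans_lt (h 0 (Nat.zero_le j))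
  have hsplit := (Nat.mod_pow_succ (x := ∑ i ∈ s, a i) (b := M) (k := j)).symm
  rw [sum_mod_pow_of_digit_sums_lt s a fun t ht => h t (Nat.le_of_lt_succ ht),
    sum_mod_pow_of_digit_sums_lt s a fun t ht => h t (Nat.le_of_lt ht)] at hsplit
  simp only [Nat.mod_pow_succ, sum_add_distrib, ← mul_sum] at hsplit
  exact Nat.eq_of_mul_eq_mul_left ((pow_pos hM j)) (Nat.add_left_cancel hsplit)

variable {d : ℕ}

theorem digitVec_sum (h : ∀ t : Fin d, ∑ i ∈ s, digitVec M d (a i) t < M) :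
    digitVec M d (∑ i ∈ s, a i) = ∑ i ∈ s, digitVec M d (a i) := by
  funext t
  rw [Finset.sum_apply]
  exact sum_digit_of_digit_sums_lt s a fun u hu => h ⟨u, hu.trans_lt t.2⟩

theorem sum_digitVec_lt {k : ℕ} (hM : 0 < M) (hcard : #s ≤ k)
    (h : ∀ i ∈ s, ∀ t, k * digitVec M d (a i) t < M) (t : Fin d) :
    ∑ i ∈ s, digitVec M d (a i) t < M := by
  rcases s.eq_empty_or_nonempty with rfl | hs
  · simpa using hM
  refine Nat.lt_of_mul_lt_mul_left (a := k) ?_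
  calc k * ∑ i ∈ s, digitVec M d (a i) t = ∑ i ∈ s, k * digitVec M d (a i) t := mul_sum _ _ _
    _ < ∑ _i ∈ s, M := sum_lt_sum_of_nonempty hs fun i hi => h i hi t
    _ = #s * M := by rw [sum_const, smul_eq_mul]
    _ ≤ k * M := Nat.mul_le_mul_right M hcard

end NoCarry

theorem sphere_digits_force_trivial (M d k : ℕ) (hM : 2 ≤ M)
    (hk : 3 ≤ k) (A : Finset ℕ) (r : ℕ)
    (hsphere : ∀ n ∈ A, ∑ i : Fin d, (digitVec M d n i) ^ 2 = r)
    (hsmall : ∀ n ∈ A, ∀ i : Fin d, k * digitVec M d n i < M)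
    (x : Fin k → ℕ) (hx : ∀ i, x i ∈ A)
    (heq : (∑ i ∈ Finset.univ.filter fun i : Fin k => (i : ℕ) < k - 1, x i)
      = (k - 1) * x ⟨k - 1, by omega⟩) :
    ∀ i j : Fin k, digitVec M d (x i) = digitVec M d (x j) := by
  set S := Finset.univ.filter fun i : Fin k => (i : ℕ) < k - 1 with hS
  set last : Fin k := ⟨k - 1, by omega⟩
  have hcard : #S = k - 1 := by
    rw [show S = Finset.Iio last by ext i; simp [hS, last, Fin.lt_def], Fin.card_Iio]
  have hnocarry (a : Fin k → ℕ) (ha : ∀ i, a i ∈ A) :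
      digitVec M d (∑ i ∈ S, a i) = ∑ i ∈ S, digitVec M d (a i) :=
    digitVec_sum S a (sum_digitVec_lt S a (by omega) (by omega) fun i _ => hsmall _ (ha i))
  have hvec : ∑ i ∈ S, digitVec M d (x i) = #S • digitVec M d (x last) := by
    have hlast : (k - 1) * x last = ∑ _i ∈ S, x last := by rw [sum_const, hcard, smul_eq_mul]
    rw [← hnocarry x hx, heq, hlast, hnocarry (fun _ => x last) (fun _ => hx last), sum_const]
  have hdot (n : ℕ) (hn : n ∈ A) : digitVec M d n ⬝ᵥ digitVec M d n = r := by
    simp only [dotProduct, ← sq, hsphere n hn]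
  have hS_eq := Nat.eq_of_sum_eq_card_smul_of_dotProduct_self_eq
    (fun i _ => (hdot _ (hx i)).trans (hdot _ (hx last)).symm) hvec
  suffices hall : ∀ i, digitVec M d (x i) = digitVec M d (x last) from
    fun i j => (hall i).trans (hall j).symm
  intro i
  by_cases hi : i ∈ S
  · exact hS_eq i hi
  · rw [show i = last by ext; simp [hS, last] at hi ⊢; omega]
end
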